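/- arXiv:1805.04999 — 4 statements merged into one kernel-verified Lean document; each statement's English description precedes it below -/
import Mathlib

section
/- Let m ≥ 1 and let X_1, …, X_m be commuting indeterminates over ℚ. Then Σ_{S ⊆ {1,…,m}} (-1)^{|S|} (Σ_{i∈S} X_i)^{m+1} = (-1)^m · ((m+1)!/2) · (Σ_{i=1}^m X_i) · Π_{i=1}^m X_i, with the convention that an empty sum is 0. -/
/-!
Expand `(∑_{i ∈ S} x_i) ^ n = (∑_i [i ∈ S] x_i) ^ n` by the multinomial theorem and sum over `S`
first: the alternating sum of `∏_i ([i ∈ S] x_i) ^ k_i` factors as `∏_i (0 ^ k_i - x_i ^ k_i)`,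
which vanishes unless every `k_i ≥ 1`. For `n = m + 1` the only such exponents are
`k = 1 + e_i`, with multinomial coefficient `(m + 1)! / 2`.
-/

open Finset
open scoped Nat

variable {ι R : Type*} [Fintype ι] [CommRing R]

section

variable [DecidableEq ι]

theorem Fintype.sum_neg_one_pow_card_mul_prod_ite (g h : ι → R) :
    ∑ S : Finset ι, (-1) ^ #S * ∏ i, (if i ∈ S then g i else h i) = ∏ i, (h i - g i) := by
  simp_rw [sub_eq_neg_add, Fintype.prod_add, prod_neg, prod_ite, filter_mem_eq_inter,
    univ_inter, filter_not, filter_mem_eq_inter, univ_inter, ← compl_eq_univ_sdiff, mul_assoc]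

theorem sum_neg_one_pow_card_mul_sum_pow (f : ι → R) (n : ℕ) :
    ∑ S : Finset ι, (-1) ^ #S * (∑ i ∈ S, f i) ^ n
      = ∑ k ∈ piAntidiag univ n, Nat.multinomial univ k * ∏ i, (0 ^ k i - f i ^ k i) := by
  calc _ = ∑ S : Finset ι, ∑ k ∈ piAntidiag univ n,
        Nat.multinomial univ k * ((-1) ^ #S * ∏ i, (if i ∈ S then f i else 0) ^ k i) := by
        refine Finset.sum_congr rfl fun S _ => ?_
        rw [← sum_ite_mem_eq, sum_pow_eq_sum_piAntidiag, mul_sum]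
        exact Finset.sum_congr rfl fun k _ => by ring
    _ = _ := by
        rw [sum_comm]
        refine Finset.sum_congr rfl fun k _ => ?_
        simp_rw [← Fintype.sum_neg_one_pow_card_mul_prod_ite, mul_sum, ite_pow]

theorem exists_eq_single_add_one_of_sum_eq_card_add_one {k : ι → ℕ}
    (hsum : ∑ i, k i = Fintype.card ι + 1) (hpos : ∀ i, k i ≠ 0) :
    ∃ i, k = Pi.single i 1 + 1 := by
  have hk : k = (k - 1) + 1 :=
    funext fun i => (Nat.sub_add_cancel (Nat.one_le_iff_ne_zero.2 (hpos i))).symm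
  have hl : ∑ i, (k - 1) i = 1 := by
    have : ∑ i, k i = ∑ i, (k - 1) i + Fintype.card ι := by
      conv_lhs => rw [hk]
      simp [sum_add_distrib]
    omega
  obtain ⟨i, -, hi⟩ := exists_ne_zero_of_sum_ne_zero (hl.trans_ne one_ne_zero)
  have hsplit := add_sum_erase univ (k - 1) (mem_univ i)
  have hrest := sum_eq_zero_iff.1 (by omega : ∑ j ∈ univ.erase i, (k - 1) j = 0)
  refine ⟨i, hk.trans (congrArg (· + 1) (funext fun j => ?_))⟩
  obtain rfl | hj := eq_or_ne j i
  · simp only [Pi.single_eq_same]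
    omega
  · rw [Pi.single_eq_of_ne hj]
    exact hrest j (mem_erase.2 ⟨hj, mem_univ j⟩)

theorem two_mul_multinomial_single_add_one (i : ι) :
    2 * Nat.multinomial univ (Pi.single i 1 + 1) = (Fintype.card ι + 1)! := by
  have hprod : ∏ j, ((Pi.single i 1 + 1 : ι → ℕ) j)! = 2 := by
    rw [prod_eq_single i (fun j _ hj => by simp [Pi.single_eq_of_ne hj]) (by simp)]
    simp
  have hsum : ∑ j, (Pi.single i 1 + 1 : ι → ℕ) j = Fintype.card ι + 1 := by
    simp [sum_add_distrib, add_comm]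
  rw [← hprod, Nat.multinomial_spec, hsum]

theorem prod_zero_pow_sub_pow_single_add_one (f : ι → R) (i : ι) :
    ∏ j, (0 ^ (Pi.single i 1 + 1 : ι → ℕ) j - f j ^ (Pi.single i 1 + 1 : ι → ℕ) j)
      = (-1) ^ Fintype.card ι * (f i * ∏ j, f j) := by
  simp only [Pi.add_apply, Pi.one_apply, pow_succ, mul_zero, zero_sub, prod_neg,
    prod_mul_distrib]
  congr 2
  rw [prod_eq_single i (fun j _ hj => by simp [Pi.single_eq_of_ne hj]) (by simp)]
  simp

end

theorem two_mul_sum_neg_one_pow_card_mul_sum_pow_card_add_one (f : ι → R) :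
    2 * ∑ S : Finset ι, (-1) ^ #S * (∑ i ∈ S, f i) ^ (Fintype.card ι + 1)
      = (-1) ^ Fintype.card ι * (Fintype.card ι + 1)! * (∑ i, f i) * ∏ i, f i := by
  classical
  set shifted : Finset (ι → ℕ) := univ.image fun i => Pi.single i 1 + 1
  have hsub : shifted ⊆ piAntidiag univ (Fintype.card ι + 1) := by
    simp [shifted, subset_iff, sum_add_distrib, add_comm]
  have hvanish : ∀ k ∈ piAntidiag univ (Fintype.card ι + 1), k ∉ shifted →
      (Nat.multinomial univ k : R) * ∏ i, (0 ^ k i - f i ^ k i) = 0 := by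
    intro k hk hk_shifted
    obtain ⟨i, hi⟩ : ∃ i, k i = 0 := by
      by_contra! hpos
      obtain ⟨i, rfl⟩ :=
        exists_eq_single_add_one_of_sum_eq_card_add_one (mem_piAntidiag.1 hk).1 hpos
      exact hk_shifted (mem_image_of_mem _ (mem_univ i))
    rw [prod_eq_zero (mem_univ i) (by simp [hi]), mul_zero]
  have hinj : Set.InjOn (fun i : ι => (Pi.single i 1 + 1 : ι → ℕ)) (univ : Finset ι) :=
    fun i _ j _ hij => by simpa [Pi.single_apply, eq_comm] using congrFun hij i
  rw [sum_neg_one_pow_card_mul_sum_pow, ← sum_subset hsub hvanish, sum_image hinj, mul_sum,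
    mul_sum, sum_mul]
  refine Finset.sum_congr rfl fun i _ => ?_
  rw [prod_zero_pow_sub_pow_single_add_one, ← mul_assoc, ← Nat.cast_ofNat, ← Nat.cast_mul,
    two_mul_multinomial_single_add_one]
  ring

open MvPolynomial

theorem alt_subset_sum_pow_diag_succ_general (m : ℕ) :
    ∑ S : Finset (Fin m),
        (-1) ^ S.card * (∑ i ∈ S, (X i : MvPolynomial (Fin m) ℚ)) ^ (m + 1)
      = C ((-1 : ℚ) ^ m * ((m + 1).factorial : ℚ) / 2)
          * (∑ i : Fin m, X i) * ∏ i : Fin m, X i := by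
  have h := two_mul_sum_neg_one_pow_card_mul_sum_pow_card_add_one
    (X : Fin m → MvPolynomial (Fin m) ℚ)
  rw [Fintype.card_fin] at h
  have hC : 2 * C ((-1 : ℚ) ^ m * ((m + 1).factorial : ℚ) / 2)
      = (-1) ^ m * ((m + 1)! : MvPolynomial (Fin m) ℚ) := by
    rw [← map_ofNat C 2, ← C_mul, mul_div_cancel₀ _ two_ne_zero]
    simp
  refine mul_left_cancel₀ (two_ne_zero : (2 : MvPolynomial (Fin m) ℚ) ≠ 0) (h.trans ?_)
  linear_combination (∑ i, X i) * (∏ i, X i) * hC.symm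

theorem alt_subset_sum_pow_diag_succ (m : ℕ) (hm : 1 ≤ m) :
    ∑ S : Finset (Fin m),
        (-1) ^ S.card * (∑ i ∈ S, (X i : MvPolynomial (Fin m) ℚ)) ^ (m + 1)
      = C ((-1 : ℚ) ^ m * ((m + 1).factorial : ℚ) / 2)
          * (∑ i : Fin m, X i) * ∏ i : Fin m, X i :=
  alt_subset_sum_pow_diag_succ_general m
end

section
/- Let m ≥ 1 and let X_1, …, X_m be commuting indeterminates over ℚ. Then Σ_{S ⊆ {1,…,m}} (-1)^{|S|} (Σ_{i∈S} X_i)^{m+2} = (-1)^m · (m+2)! · ( (1/4)·Σ_{1≤i<j≤m} X_i X_j + (1/6)·Σ_{i=1}^m X_i^2 ) · Π_{i=1}^m X_i, with the convention that an empty sum is 0. -/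
/-!
Work with the exponential generating function in an auxiliary variable `t`: since
`e^{t(a + b)} = e^{ta} e^{tb}`, expanding the product gives
`∏ i, (1 - e^{t xᵢ}) = ∑ S, (-1)^|S| e^{t ∑_{i ∈ S} xᵢ}`, so the left-hand side is `(m + 2)!` times
the coefficient of `t^(m+2)` in this product. Writing `1 - e^{tx} = -tx · (e^{tx} - 1)/(tx)`, the
product is `(-t)^m ∏ xᵢ` times `∏ i, (1 + xᵢ t/2 + xᵢ² t²/6 + …)`, whose coefficient of `t²` is
`∑_{i<j} xᵢ xⱼ / 4 + ∑ xᵢ² / 6`.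
-/

open Finset
open scoped Nat

namespace PowerSeries

section CoeffProd

variable {R : Type*} [CommRing R]

theorem coeff_two_mul (f g : R⟦X⟧) :
    coeff 2 (f * g)
      = constantCoeff f * coeff 2 g + coeff 1 f * coeff 1 g + coeff 2 f * constantCoeff g := by
  rw [coeff_mul, Nat.sum_antidiagonal_eq_sum_range_succ_mk]
  simp [sum_range_succ, coeff_zero_eq_constantCoeff_apply]

theorem coeff_one_prod {ι : Type*} (s : Finset ι) (f : ι → R⟦X⟧)
    (hf : ∀ i ∈ s, constantCoeff (f i) = 1) :
    coeff 1 (∏ i ∈ s, f i) = ∑ i ∈ s, coeff 1 (f i) := by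
  classical
  induction s using Finset.induction_on with
  | empty => simp
  | insert a s ha ih =>
    have hs : ∀ i ∈ s, constantCoeff (f i) = 1 := fun i hi => hf i (mem_insert_of_mem hi)
    rw [prod_insert ha, sum_insert ha, coeff_one_mul, map_prod constantCoeff, prod_eq_one hs,
      ih hs, hf a (mem_insert_self a s)]
    ring

theorem coeff_two_prod {ι : Type*} [LinearOrder ι] (s : Finset ι) (f : ι → R⟦X⟧)
    (hf : ∀ i ∈ s, constantCoeff (f i) = 1) :
    coeff 2 (∏ i ∈ s, f i) = ∑ i ∈ s, coeff 2 (f i)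
      + ∑ j ∈ s, ∑ i ∈ s with i < j, coeff 1 (f i) * coeff 1 (f j) := by
  induction s using Finset.induction_on_max with
  | empty => simp
  | insert a s ha ih =>
    have hs : ∀ i ∈ s, constantCoeff (f i) = 1 := fun i hi => hf i (mem_insert_of_mem hi)
    have ha' : a ∉ s := fun h => lt_irrefl a (ha a h)
    have hfilter : ∀ j ∈ s, ∑ i ∈ insert a s with i < j, coeff 1 (f i) * coeff 1 (f j)
        = ∑ i ∈ s with i < j, coeff 1 (f i) * coeff 1 (f j) := fun j hj => by
      rw [filter_insert, if_neg (ha j hj).not_gt]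
    rw [prod_insert ha', sum_insert ha', sum_insert ha', coeff_two_mul, map_prod constantCoeff,
      prod_eq_one hs, coeff_one_prod s f hs, ih hs, hf a (mem_insert_self a s), filter_insert,
      if_neg (lt_irrefl a), filter_true_of_mem ha, sum_congr rfl hfilter, ← sum_mul]
    ring

end CoeffProd

section Exp

variable {A : Type*} [CommRing A] [Algebra ℚ A]

theorem prod_rescale_exp {ι : Type*} (s : Finset ι) (x : ι → A) :
    ∏ i ∈ s, rescale (x i) (exp A) = rescale (∑ i ∈ s, x i) (exp A) := by
  classical
  induction s using Finset.induction_on with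
  | empty => simp
  | insert a s ha ih => rw [prod_insert ha, sum_insert ha, ih, exp_mul_exp_eq_exp_add]

theorem prod_one_sub_rescale_exp {ι : Type*} [DecidableEq ι] (s : Finset ι) (x : ι → A) :
    ∏ i ∈ s, (1 - rescale (x i) (exp A))
      = ∑ S ∈ s.powerset, (-1) ^ S.card * rescale (∑ i ∈ S, x i) (exp A) := by
  simp_rw [sub_eq_neg_add, prod_add, prod_const_one, mul_one, prod_neg, prod_rescale_exp]

theorem factorial_smul_coeff_prod_one_sub_rescale_exp {ι : Type*} [DecidableEq ι]
    (s : Finset ι) (x : ι → A) (n : ℕ) :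
    n ! • coeff n (∏ i ∈ s, (1 - rescale (x i) (exp A)))
      = ∑ S ∈ s.powerset, (-1) ^ S.card * (∑ i ∈ S, x i) ^ n := by
  have hn : (n ! : A) * algebraMap ℚ A (1 / n !) = 1 := by
    rw [← map_natCast (algebraMap ℚ A), ← map_mul, mul_one_div_cancel (by positivity), map_one]
  have hC (k : ℕ) : ((-1) ^ k : A⟦X⟧) = C ((-1) ^ k) := by simp
  simp_rw [prod_one_sub_rescale_exp, map_sum, smul_sum, hC, coeff_C_mul, coeff_rescale, coeff_exp]
  refine sum_congr rfl fun S _ => ?_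
  rw [nsmul_eq_mul]
  linear_combination ((-1) ^ S.card * (∑ i ∈ S, x i) ^ n) * hn

variable (A) in
def exprel : A⟦X⟧ :=
  mk fun n => algebraMap ℚ A (1 / (n + 1)!)

@[simp] theorem coeff_exprel (n : ℕ) : coeff n (exprel A) = algebraMap ℚ A (1 / (n + 1)!) :=
  coeff_mk _ _

@[simp] theorem constantCoeff_exprel : constantCoeff (exprel A) = 1 := by
  rw [← coeff_zero_eq_constantCoeff_apply, coeff_exprel]
  simp

theorem exp_eq_one_add_X_mul_exprel : exp A = 1 + X * exprel A := by
  ext n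
  cases n <;> simp [coeff_succ_X_mul]

theorem one_sub_rescale_exp (a : A) :
    1 - rescale a (exp A) = -(C a * X) * rescale a (exprel A) := by
  rw [exp_eq_one_add_X_mul_exprel, map_add, map_mul, map_one, rescale_X]
  ring

theorem prod_one_sub_rescale_exp_eq_C_mul_X_pow_mul {ι : Type*} (s : Finset ι) (x : ι → A) :
    ∏ i ∈ s, (1 - rescale (x i) (exp A))
      = C ((-1) ^ s.card * ∏ i ∈ s, x i) * (X ^ s.card * ∏ i ∈ s, rescale (x i) (exprel A)) := by
  simp_rw [one_sub_rescale_exp, neg_mul, prod_neg, prod_mul_distrib, prod_const]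
  rw [← map_prod, map_mul, map_pow, map_neg, map_one]
  ring

theorem coeff_two_prod_rescale_exprel {ι : Type*} [LinearOrder ι] (s : Finset ι) (x : ι → A) :
    coeff 2 (∏ i ∈ s, rescale (x i) (exprel A))
      = algebraMap ℚ A (1 / 4) * ∑ j ∈ s, ∑ i ∈ s with i < j, x i * x j
        + algebraMap ℚ A (1 / 6) * ∑ i ∈ s, x i ^ 2 := by
  rw [coeff_two_prod s _ fun i _ => by simp [← coeff_zero_eq_constantCoeff_apply, coeff_rescale]]
  have h4 : algebraMap ℚ A (1 / (1 + 1)!) * algebraMap ℚ A (1 / (1 + 1)!)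
      = algebraMap ℚ A (1 / 4) := by
    rw [← map_mul]
    norm_num [Nat.factorial]
  have h6 : algebraMap ℚ A (1 / (2 + 1)!) = algebraMap ℚ A (1 / 6) := by
    norm_num [Nat.factorial]
  simp only [coeff_rescale, coeff_exprel, mul_sum, h6, pow_one]
  rw [add_comm]
  congr 1
  · exact sum_congr rfl fun j _ => sum_congr rfl fun i _ => by linear_combination (x i * x j) * h4
  · exact sum_congr rfl fun i _ => mul_comm _ _

end Exp

end PowerSeries

open PowerSeries in
theorem sum_neg_one_pow_card_mul_sum_pow_card_add_two {A ι : Type*} [CommRing A] [Algebra ℚ A]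
    [Fintype ι] [LinearOrder ι] (x : ι → A) :
    ∑ S : Finset ι, (-1) ^ S.card * (∑ i ∈ S, x i) ^ (Fintype.card ι + 2)
      = (-1) ^ Fintype.card ι * (Fintype.card ι + 2)!
          * (algebraMap ℚ A (1 / 4) * ∑ j, ∑ i with i < j, x i * x j
            + algebraMap ℚ A (1 / 6) * ∑ i, x i ^ 2) * ∏ i, x i := by
  rw [← powerset_univ, ← factorial_smul_coeff_prod_one_sub_rescale_exp,
    prod_one_sub_rescale_exp_eq_C_mul_X_pow_mul, coeff_C_mul, card_univ, add_comm _ 2,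
    coeff_X_pow_mul, coeff_two_prod_rescale_exprel, nsmul_eq_mul]
  ring

theorem Finset.sum_filter_fst_lt_snd {ι M : Type*} [Fintype ι] [LinearOrder ι] [AddCommMonoid M]
    (g : ι → ι → M) :
    ∑ p ∈ univ.filter (fun p : ι × ι => p.1 < p.2), g p.1 p.2 = ∑ j, ∑ i with i < j, g i j := by
  rw [sum_filter, Fintype.sum_prod_type, sum_comm]
  simp only [sum_filter]

open MvPolynomial

theorem alt_subset_sum_pow_diag_succ_succ_general (m : ℕ) :
    ∑ S : Finset (Fin m),
        (-1) ^ S.card * (∑ i ∈ S, (X i : MvPolynomial (Fin m) ℚ)) ^ (m + 2)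
      = C ((-1 : ℚ) ^ m * ((m + 2).factorial : ℚ))
          * (C ((1 : ℚ) / 4)
              * (∑ p ∈ Finset.univ.filter (fun p : Fin m × Fin m => p.1 < p.2),
                  X p.1 * X p.2)
            + C ((1 : ℚ) / 6) * ∑ i : Fin m, X i ^ 2)
          * ∏ i : Fin m, X i := by
  have h := sum_neg_one_pow_card_mul_sum_pow_card_add_two fun i : Fin m =>
    (X i : MvPolynomial (Fin m) ℚ)
  rw [Fintype.card_fin] at h
  rw [h, sum_filter_fst_lt_snd fun i j => (X i : MvPolynomial (Fin m) ℚ) * X j,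
    ← MvPolynomial.algebraMap_eq, map_mul, map_pow, map_neg, map_one, map_natCast]

theorem alt_subset_sum_pow_diag_succ_succ (m : ℕ) (hm : 1 ≤ m) :
    ∑ S : Finset (Fin m),
        (-1) ^ S.card * (∑ i ∈ S, (X i : MvPolynomial (Fin m) ℚ)) ^ (m + 2)
      = C ((-1 : ℚ) ^ m * ((m + 2).factorial : ℚ))
          * (C ((1 : ℚ) / 4)
              * (∑ p ∈ Finset.univ.filter (fun p : Fin m × Fin m => p.1 < p.2),
                  X p.1 * X p.2)
            + C ((1 : ℚ) / 6) * ∑ i : Fin m, X i ^ 2)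
          * ∏ i : Fin m, X i :=
  alt_subset_sum_pow_diag_succ_succ_general m
end

section
/- For every integer n ≥ 2 and every rational number d, the identity Σ_{k=0}^{n-1} (-1)^{n+k+1} · C(n-1,k) · binom(kd−1, n) = d^{n-1}·((n−1)d − (n+1))/2 holds, i.e., the quantity A_0 from the Euler characteristic computation of a complete intersection surface equals d^{n-1}·e'/2 with e' = (n−1)d − n − 1. -/
/-!
The alternating sum is `Δ^(n-1) f 0 / n!` for the forward difference `Δ` and the degree-`n`
polynomial `f x = ∏_{i<n} (d x - (i + 1)) = n! · binom(x d - 1, n)`. An `m`-th forward difference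
at `0` of a polynomial of degree `≤ m + 1` only sees its two top coefficients, since
`Δ^m x^j = 0` for `j < m`, `Δ^m x^m = m!` and `Δ^m x^(m+1) (0) = m! · C(m+1, 2)`. The top
coefficients of `f` are `d^n` and `-d^(n-1) · (1 + 2 + ⋯ + n)`.
-/

/-- The generalized binomial coefficient `binom(x, n) = x(x-1)⋯(x-n+1)/n!` for `x : ℚ`. -/
def gbinom (x : ℚ) (n : ℕ) : ℚ :=
  (∏ i ∈ Finset.range n, (x - i)) / (n.factorial : ℚ)

open Finset Polynomial Function fwdDiff

theorem sum_range_natCast_add_one {R : Type*} [Semiring R] (n : ℕ) :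
    ∑ i ∈ range n, ((i : R) + 1) = (n + 1).choose 2 := by
  induction n with
  | zero => simp
  | succ n ih =>
    rw [sum_range_succ, ih, Nat.choose_succ_succ' (n + 1) 1, Nat.choose_one_right]
    push_cast
    abel

theorem fwdDiff_iter_apply_zero_eq_sum {R : Type*} [Ring R] (f : R → R) (m : ℕ) :
    (Δ_[1])^[m] f 0 = ∑ k ∈ range (m + 1), (-1) ^ (m + k) * m.choose k * f k := by
  rw [fwdDiff_iter_eq_sum_shift]
  refine sum_congr rfl fun k hk ↦ ?_
  have hsign : (-1 : R) ^ (m + k) = (-1) ^ (m - k) := by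
    rw [show m + k = m - k + 2 * k by have := mem_range.1 hk; omega, pow_add, pow_mul]
    simp
  simp [zsmul_eq_mul, hsign]

section ForwardDifference

variable {R : Type*} [CommRing R]

theorem fwdDiff_pow (j : ℕ) :
    Δ_[1] (fun r : R ↦ r ^ j) = ∑ i ∈ range j, j.choose i • fun r : R ↦ r ^ i := by
  ext x
  simp [nsmul_eq_mul, fwdDiff, add_pow, sum_range_succ, mul_comm]

theorem fwdDiff_iter_pow_succ_apply_zero (m : ℕ) :
    (Δ_[1])^[m] (fun r : R ↦ r ^ (m + 1)) 0 = m.factorial * (m + 1).choose 2 := by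
  induction m with
  | zero => simp
  | succ m ih =>
    rw [iterate_succ_apply, fwdDiff_pow, fwdDiff_iter_finsetSum, Finset.sum_apply, sum_range_succ,
      sum_range_succ, sum_eq_zero fun i hi ↦ by
        rw [fwdDiff_iter_const_smul, fwdDiff_iter_pow_eq_zero_of_lt (mem_range.1 hi), smul_zero,
          Pi.zero_apply]]
    rw [fwdDiff_iter_const_smul, fwdDiff_iter_const_smul, Pi.smul_apply, Pi.smul_apply, ih,
      fwdDiff_iter_eq_factorial, zero_add, Pi.natCast_apply, nsmul_eq_mul, nsmul_eq_mul]
    have hshift : (m + 2) * (m + 1).choose 2 = m * (m + 2).choose 2 := by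
      simpa [mul_comm] using Nat.choose_mul_succ_eq (m + 1) 2
    have key : (m + 2).choose m * m.factorial
        + (m + 2).choose (m + 1) * (m.factorial * (m + 1).choose 2)
          = (m + 1).factorial * (m + 2).choose 2 := by
      rw [Nat.choose_symm_add, Nat.choose_succ_self_right, ← mul_assoc, mul_comm (m + 2),
        mul_assoc, hshift, Nat.factorial_succ]
      ring
    have := congrArg (Nat.cast : ℕ → R) key
    push_cast at this ⊢
    linear_combination this

theorem Polynomial.fwdDiff_iter_eval_apply_zero_of_natDegree_le {P : R[X]} {m : ℕ}
    (hP : P.natDegree ≤ m + 1) :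
    (Δ_[1])^[m] P.eval 0 = m.factorial * (P.coeff m + (m + 1).choose 2 * P.coeff (m + 1)) := by
  have hsum : P.eval = ∑ i ∈ range (m + 2), P.coeff i • fun r : R ↦ r ^ i := by
    ext x
    simp [eval_eq_sum_range' (show P.natDegree < m + 2 by omega), Finset.sum_apply]
  rw [hsum, fwdDiff_iter_finsetSum, Finset.sum_apply, sum_range_succ, sum_range_succ,
    sum_eq_zero fun i hi ↦ by
      rw [fwdDiff_iter_const_smul, fwdDiff_iter_pow_eq_zero_of_lt (mem_range.1 hi), smul_zero,
        Pi.zero_apply]]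
  simp only [fwdDiff_iter_const_smul, fwdDiff_iter_eq_factorial, Pi.smul_apply, Pi.natCast_apply,
    smul_eq_mul, zero_add, fwdDiff_iter_pow_succ_apply_zero]
  ring

theorem fwdDiff_iter_prod_sub_apply_zero {ι : Type*} (s : Finset ι) (a : ι → R) (d : R)
    {m : ℕ} (hs : #s = m + 1) :
    (Δ_[1])^[m] (fun x ↦ ∏ i ∈ s, (d * x - a i)) 0
      = m.factorial * d ^ m * ((m + 1).choose 2 * d - ∑ i ∈ s, a i) := by
  nontriviality R
  set Q : R[X] := ∏ i ∈ s, (X - C (a i)) with hQ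
  have hdeg : Q.natDegree = m + 1 := by rw [hQ, natDegree_finsetProd_X_sub_C_eq_card, hs]
  have hlead : Q.coeff (m + 1) = 1 := by
    rw [← hdeg]
    exact (monic_prod_of_monic _ _ fun i _ ↦ monic_X_sub_C (a i)).coeff_natDegree
  have hnext : Q.coeff m = -∑ i ∈ s, a i := by
    simpa [hs] using prod_X_sub_C_coeff_card_pred s a (by omega)
  have heval : (fun x ↦ ∏ i ∈ s, (d * x - a i)) = (Q.comp (C d * X)).eval := by
    ext x
    simp [hQ, eval_prod]
  have hdeg_comp : (Q.comp (C d * X)).natDegree ≤ m + 1 :=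
    natDegree_comp_le.trans <| hdeg ▸
      mul_le_of_le_one_right (Nat.zero_le _) ((natDegree_C_mul_le d X).trans natDegree_X_le)
  rw [heval, fwdDiff_iter_eval_apply_zero_of_natDegree_le hdeg_comp, comp_C_mul_X_coeff,
    comp_C_mul_X_coeff, hlead, hnext]
  ring

end ForwardDifference

theorem A0_closed_form (n : ℕ) (hn : 2 ≤ n) (d : ℚ) :
    ∑ k ∈ Finset.range n,
        (-1) ^ (n + k + 1) * ((n - 1).choose k : ℚ) * gbinom ((k : ℚ) * d - 1) n
      = d ^ (n - 1) * (((n : ℚ) - 1) * d - ((n : ℚ) + 1)) / 2 := by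
  obtain ⟨m, rfl⟩ : ∃ m, n = m + 1 := ⟨n - 1, by omega⟩
  set f : ℚ → ℚ := fun x ↦ ∏ i ∈ range (m + 1), (d * x - ((i : ℚ) + 1))
  have hterm : ∀ k ∈ range (m + 1),
      (-1) ^ (m + 1 + k + 1) * ((m + 1 - 1).choose k : ℚ) * gbinom ((k : ℚ) * d - 1) (m + 1)
        = (-1) ^ (m + k) * m.choose k * f k / (m + 1).factorial := by
    intro k _
    have hprod : ∏ i ∈ range (m + 1), ((k : ℚ) * d - 1 - i) = f k :=
      prod_congr rfl fun i _ ↦ by ring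
    rw [gbinom, hprod, add_tsub_cancel_right, pow_add, pow_add, pow_add]
    ring
  rw [sum_congr rfl hterm, ← sum_div, ← fwdDiff_iter_apply_zero_eq_sum,
    fwdDiff_iter_prod_sub_apply_zero _ _ _ (card_range _), sum_range_natCast_add_one,
    Nat.factorial_succ, Nat.cast_choose_two, Nat.cast_choose_two]
  push_cast
  field_simp
  ring
end

section
/- For every integer n ≥ 2 and every rational number d, the identity Σ_{k=0}^{n-1} (-1)^{n+k+1} · C(n−2, k−1) · binom(kd−1, n) = ((3n−2)d − (3n+2))/24 · d^{n-2}·(d−1)·(n+1) holds, where C(n−2, k−1) := 0 for k = 0; i.e., the quantity A_2 from the Euler characteristic computation of a complete intersection surface has the stated closed form. -/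
open Finset fwdDiff

theorem fwdDiff_iter_eq_sum_neg_one_pow_mul {M R : Type*} [AddCommMonoid M] [Ring R]
    (f : M → R) (d y : M) (m : ℕ) :
    Δ_[d] ^[m] f y = ∑ k ∈ range (m + 1), (-1) ^ (m + k) * m.choose k * f (y + k • d) := by
  rw [fwdDiff_iter_eq_sum_shift]
  refine sum_congr rfl fun k hk => ?_
  obtain ⟨i, rfl⟩ : ∃ i, m = k + i := ⟨m - k, by grind⟩
  rw [show k + i + k = i + 2 * k by ring, pow_add, pow_mul, neg_one_sq, one_pow, mul_one,
    Nat.add_sub_cancel_left, zsmul_eq_mul]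
  push_cast
  rfl

namespace Ring

section BinomialRing

variable {R : Type*} [CommRing R] [BinomialRing R]

theorem fwdDiff_choose (d : R) (r : ℕ) :
    Δ_[d] (choose · r) = ∑ i ∈ range r, choose d (i + 1) • (choose · (r - (i + 1))) := by
  ext x
  simp only [fwdDiff, Finset.sum_apply, Pi.smul_apply, smul_eq_mul]
  rw [add_comm, add_choose_eq r (Commute.all d x),
    Nat.sum_antidiagonal_eq_sum_range_succ (fun i j => choose d i * choose x j), sum_range_succ',
    choose_zero_right, one_mul, Nat.sub_zero, add_sub_cancel_right]

theorem fwdDiff_iter_succ_choose (d : R) (m r : ℕ) :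
    Δ_[d] ^[m + 1] (choose · r) =
      ∑ i ∈ range r, choose d (i + 1) • Δ_[d] ^[m] (choose · (r - (i + 1))) := by
  rw [Function.iterate_succ_apply, fwdDiff_choose, fwdDiff_iter_finsetSum]
  simp only [fwdDiff_iter_const_smul]

theorem fwdDiff_iter_choose_of_lt {m r : ℕ} (h : r < m) (d : R) :
    Δ_[d] ^[m] (choose · r) = 0 := by
  induction m generalizing r with
  | zero => omega
  | succ m ih =>
    rw [fwdDiff_iter_succ_choose]
    exact sum_eq_zero fun i hi => by rw [ih (by grind), smul_zero]

theorem fwdDiff_iter_choose_self (d : R) (m : ℕ) :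
    Δ_[d] ^[m] (choose · m) = fun _ => d ^ m := by
  induction m with
  | zero => ext; simp
  | succ m ih =>
    rw [fwdDiff_iter_succ_choose, sum_range_succ', sum_eq_zero fun i hi => by
      rw [fwdDiff_iter_choose_of_lt (by grind), smul_zero]]
    ext
    simp [ih, pow_succ, mul_comm]

end BinomialRing

section Field

variable {K : Type*} [Field K] [CharZero K]

theorem choose_eq_prod_range_div (x : K) (n : ℕ) :
    choose x n = (∏ i ∈ range n, (x - i)) / n.factorial := by
  rw [choose_eq_smul, ← Polynomial.aeval_eq_smeval, Polynomial.aeval_def,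
    Polynomial.eval₂_eq_eval_map, descPochhammer_map, descPochhammer_eval_eq_prod_range,
    smul_eq_mul, div_eq_inv_mul]

theorem choose_two (x : K) : choose x 2 = x * (x - 1) / 2 := by
  simp [choose_eq_prod_range_div, prod_range_succ, Nat.factorial]

theorem choose_three (x : K) : choose x 3 = x * (x - 1) * (x - 2) / 6 := by
  simp [choose_eq_prod_range_div, prod_range_succ, Nat.factorial]

theorem fwdDiff_iter_choose_succ_self (d y : K) (m : ℕ) :
    Δ_[d] ^[m] (choose · (m + 1)) y = d ^ m * (y + m * (d - 1) / 2) := by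
  induction m with
  | zero => simp
  | succ m ih =>
    rw [fwdDiff_iter_succ_choose, sum_range_succ', sum_range_succ', sum_eq_zero fun i hi => by
      rw [fwdDiff_iter_choose_of_lt (by grind), smul_zero]]
    simp only [zero_add, Nat.reduceAdd, Nat.reduceSubDiff, add_tsub_cancel_right, choose_one_right, choose_two,
      Pi.add_apply, Pi.smul_apply, smul_eq_mul, fwdDiff_iter_choose_self, ih, Nat.cast_add,
      Nat.cast_one]
    ring

theorem fwdDiff_iter_choose_add_two_self (d y : K) (m : ℕ) :
    Δ_[d] ^[m] (choose · (m + 2)) y = d ^ m * (y * (y - 1) / 2 + m * (d - 1) / 2 * y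
      + m * (m - 1) * (d - 1) ^ 2 / 8 + m * (d - 1) * (d - 2) / 6) := by
  induction m with
  | zero => simp [choose_two]
  | succ m ih =>
    rw [fwdDiff_iter_succ_choose, sum_range_succ', sum_range_succ', sum_range_succ',
      sum_eq_zero fun i hi => by rw [fwdDiff_iter_choose_of_lt (by grind), smul_zero]]
    simp only [zero_add, Nat.reduceAdd, Nat.reduceSubDiff, add_tsub_cancel_right, Nat.add_one_sub_one,
      choose_one_right, choose_two, choose_three, Pi.add_apply, Pi.smul_apply, smul_eq_mul,
      fwdDiff_iter_choose_self, fwdDiff_iter_choose_succ_self, ih, Nat.cast_add, Nat.cast_one,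
      add_sub_cancel_right]
    ring

end Field

end Ring

theorem A2_closed_form (n : ℕ) (hn : 2 ≤ n) (d : ℚ) :
    ∑ k ∈ Finset.range n,
        (-1) ^ (n + k + 1)
          * (if k = 0 then 0 else ((n - 2).choose (k - 1) : ℚ))
          * gbinom ((k : ℚ) * d - 1) n
      = ((3 * (n : ℚ) - 2) * d - (3 * (n : ℚ) + 2)) / 24
          * d ^ (n - 2) * (d - 1) * ((n : ℚ) + 1) := by
  obtain ⟨m, rfl⟩ : ∃ m, n = m + 2 := ⟨n - 2, by omega⟩
  have hsum : ∑ k ∈ range (m + 2), (-1) ^ (m + 2 + k + 1)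
        * (if k = 0 then 0 else (m.choose (k - 1) : ℚ)) * gbinom ((k : ℚ) * d - 1) (m + 2)
      = Δ_[d] ^[m] (Ring.choose · (m + 2)) (d - 1) := by
    rw [fwdDiff_iter_eq_sum_neg_one_pow_mul, sum_range_succ']
    simp only [Nat.add_sub_cancel, if_pos, if_neg (Nat.succ_ne_zero _), mul_zero, zero_mul,
      add_zero, gbinom, ← Ring.choose_eq_prod_range_div]
    refine sum_congr rfl fun j _ => ?_
    rw [show m + 2 + (j + 1) + 1 = m + j + 2 * 2 by ring, pow_add _ (m + j), pow_mul, neg_one_sq,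
      one_pow, mul_one, nsmul_eq_mul]
    push_cast
    ring_nf
  rw [Nat.add_sub_cancel, hsum, Ring.fwdDiff_iter_choose_add_two_self]
  push_cast
  ring
end
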